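/- Let h solve the height system with Bernoulli constant r, let s > s₀, set w(q,p) = h(q,p) − H(p;s), and let F be the flow force of h. Then for every q ∈ ℝ: 2(F − σ(s;r)) = 2 (r − R(s)) w(q,1) − w(q,1)² + ∫₀¹ ( w_p(q,p)²/(h_p(q,p) H_p(p;s)²) − w_q(q,p)²/h_p(q,p) ) dp. -/

import Mathlib

open MeasureTheory Set Filter

noncomputable section

/-- `Omeg ω p = ∫₀^p ω(t) dt`, the primitive of the vorticity function. -/
def Omeg (ω : ℝ → ℝ) (p : ℝ) : ℝ := ∫ t in (0:ℝ)..p, ω t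

/-- `s0 ω = sqrt (max_{p ∈ [0,1]} 2 Ω(p))`. -/
def s0 (ω : ℝ → ℝ) : ℝ := Real.sqrt (sSup ((fun p => 2 * Omeg ω p) '' Icc (0:ℝ) 1))

/-- `Hp ω p s = (s² − 2Ω(p))^{-1/2}`. -/
def Hp (ω : ℝ → ℝ) (p s : ℝ) : ℝ := (Real.sqrt (s ^ 2 - 2 * Omeg ω p))⁻¹

/-- `Hfun ω p s = H(p; s) = ∫₀^p (s² − 2Ω(τ))^{-1/2} dτ`. -/
def Hfun (ω : ℝ → ℝ) (p s : ℝ) : ℝ := ∫ τ in (0:ℝ)..p, Hp ω τ s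

/-- `dd ω s = d(s) = H(1; s)`. -/
def dd (ω : ℝ → ℝ) (s : ℝ) : ℝ := Hfun ω 1 s

/-- `RR ω s = R(s) = s²/2 − Ω(1) + d(s)`, the Bernoulli constant of the stream solution. -/
def RR (ω : ℝ → ℝ) (s : ℝ) : ℝ := s ^ 2 / 2 - Omeg ω 1 + dd ω s

/-- `sigmaFun ω s r = σ(s; r)`. -/
def sigmaFun (ω : ℝ → ℝ) (s r : ℝ) : ℝ :=
  ∫ p in (0:ℝ)..1,
    (1 / (2 * (Hp ω p s) ^ 2) - Hfun ω p s - Omeg ω p + Omeg ω 1 + r) * Hp ω p s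

/-- Partial derivative in the first (horizontal) variable `q`. -/
def dq (f : ℝ → ℝ → ℝ) (q p : ℝ) : ℝ := deriv (fun x => f x p) q

/-- Partial derivative in the second (vertical) variable `p`. -/
def dp (f : ℝ → ℝ → ℝ) (q p : ℝ) : ℝ := deriv (fun y => f q y) p

/-- The height system with Bernoulli constant `r` on the strip `S = ℝ × [0,1]`. -/
structure HeightSol (ω : ℝ → ℝ) (r : ℝ) (h : ℝ → ℝ → ℝ) : Prop where
  smooth : ContDiff ℝ 2 (Function.uncurry h)
  hp_pos : ∀ q : ℝ, ∀ p ∈ Icc (0:ℝ) 1, 0 < dp h q p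
  pde : ∀ q : ℝ, ∀ p ∈ Icc (0:ℝ) 1,
    (1 + (dq h q p) ^ 2) / (dp h q p) ^ 2 * dp (dp h) q p
      - 2 * (dq h q p) / (dp h q p) * dp (dq h) q p
      + dq (dq h) q p - ω p * dp h q p = 0
  top : ∀ q : ℝ, (1 + (dq h q 1) ^ 2) / (2 * (dp h q 1) ^ 2) + h q 1 = r
  bot : ∀ q : ℝ, h q 0 = 0

/-- The flow force of a height function `h`, computed on the vertical line through `q`. -/
def flowForce (ω : ℝ → ℝ) (r : ℝ) (h : ℝ → ℝ → ℝ) (q : ℝ) : ℝ :=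
  ∫ p in (0:ℝ)..1,
    ((1 - (dq h q p) ^ 2) / (2 * (dp h q p) ^ 2) - h q p - Omeg ω p + Omeg ω 1 + r) * dp h q p

/-- `wfun ω s h = w^{(s)} = h − H(·; s)`. -/
def wfun (ω : ℝ → ℝ) (s : ℝ) (h : ℝ → ℝ → ℝ) (q p : ℝ) : ℝ := h q p - Hfun ω p s

/-- The flow force flux function `Φ^{(s)}`. -/
def Phi (ω : ℝ → ℝ) (s : ℝ) (h : ℝ → ℝ → ℝ) (q p : ℝ) : ℝ :=
  ∫ p' in (0:ℝ)..p,
    ((dp (wfun ω s h) q p') ^ 2 / (dp h q p' * (Hp ω p' s) ^ 2)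
      - (dq (wfun ω s h) q p') ^ 2 / dp h q p')

/-- `h ∈ C^{2,γ}(S̄)`: `h` is twice continuously differentiable, all partial derivatives of
order ≤ 2 are bounded on the strip, and the second-order derivatives are uniformly
γ-Hölder continuous on the strip. -/
def C2Holder (γ : ℝ) (h : ℝ → ℝ → ℝ) : Prop :=
  ContDiff ℝ 2 (Function.uncurry h) ∧
  (∀ g ∈ ([h, dq h, dp h, dq (dq h), dp (dq h), dp (dp h)] : List (ℝ → ℝ → ℝ)),
    ∃ M : ℝ, ∀ q : ℝ, ∀ p ∈ Icc (0:ℝ) 1, |g q p| ≤ M) ∧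
  (∀ g ∈ ([dq (dq h), dp (dq h), dp (dp h)] : List (ℝ → ℝ → ℝ)),
    ∃ C : ℝ, ∀ q q' : ℝ, ∀ p ∈ Icc (0:ℝ) 1, ∀ p' ∈ Icc (0:ℝ) 1,
      |g q p - g q' p'| ≤ C * Real.sqrt ((q - q') ^ 2 + (p - p') ^ 2) ^ γ)

end

/-! On each vertical line the identity is pointwise algebra plus the fundamental theorem of
calculus. Since `H_p⁻² = s² − 2Ω`, twice the flow-force integrand minus twice the integrand of
`σ` minus the quadratic form in `w` equals `c (h_p − H_p) − 2 h h_p + 2 H H_p` with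
`c = 2r − s² + 2Ω(1)`, which is the `p`-derivative of `c (h − H) − h² + H²`. Evaluating this
between `p = 0`, where `h = H = 0`, and `p = 1` gives `2(r − R(s)) w(q,1) − w(q,1)²`. -/

theorem flowForce_integrand_algebra {a b k η H Ω Ω₁ r s : ℝ} (ha : a ≠ 0) (hk : k ≠ 0)
    (hkΩ : (k ^ 2)⁻¹ = s ^ 2 - 2 * Ω) :
    2 * (((1 - b ^ 2) / (2 * a ^ 2) - η - Ω + Ω₁ + r) * a)
        - 2 * ((1 / (2 * k ^ 2) - H - Ω + Ω₁ + r) * k)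
        - ((a - k) ^ 2 / (a * k ^ 2) - b ^ 2 / a)
      = (2 * r - s ^ 2 + 2 * Ω₁) * (a - k) - 2 * η * a + 2 * H * k := by
  have hΩ : Ω = (s ^ 2 - (k ^ 2)⁻¹) / 2 := by linarith
  subst hΩ
  field_simp
  ring

theorem flowForce_identity_of_hasDerivAt {η a b H k Ω : ℝ → ℝ} {Ω₁ r s : ℝ}
    (hη : ∀ p ∈ Icc (0:ℝ) 1, HasDerivAt η (a p) p) (ha_cont : ContinuousOn a (Icc 0 1))
    (ha : ∀ p ∈ Icc (0:ℝ) 1, a p ≠ 0) (hb : ContinuousOn b (Icc 0 1))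
    (hH : ∀ p ∈ Icc (0:ℝ) 1, HasDerivAt H (k p) p) (hk_cont : ContinuousOn k (Icc 0 1))
    (hk : ∀ p ∈ Icc (0:ℝ) 1, k p ≠ 0) (hΩ : ContinuousOn Ω (Icc 0 1))
    (hkΩ : ∀ p ∈ Icc (0:ℝ) 1, (k p ^ 2)⁻¹ = s ^ 2 - 2 * Ω p) :
    2 * (∫ p in (0:ℝ)..1, ((1 - b p ^ 2) / (2 * a p ^ 2) - η p - Ω p + Ω₁ + r) * a p)
        - 2 * (∫ p in (0:ℝ)..1, (1 / (2 * k p ^ 2) - H p - Ω p + Ω₁ + r) * k p)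
      = (2 * r - s ^ 2 + 2 * Ω₁) * ((η 1 - H 1) - (η 0 - H 0)) - (η 1 ^ 2 - η 0 ^ 2)
          + (H 1 ^ 2 - H 0 ^ 2)
          + ∫ p in (0:ℝ)..1, ((a p - k p) ^ 2 / (a p * k p ^ 2) - b p ^ 2 / a p) := by
  have hI : uIcc (0:ℝ) 1 = Icc 0 1 := uIcc_of_le zero_le_one
  have hηc : ContinuousOn η (Icc 0 1) := fun p hp => (hη p hp).continuousAt.continuousWithinAt
  have hHc : ContinuousOn H (Icc 0 1) := fun p hp => (hH p hp).continuousAt.continuousWithinAt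
  have integrable {f : ℝ → ℝ} (hf : ContinuousOn f (Icc 0 1)) :
      IntervalIntegrable f volume 0 1 :=
    (hI ▸ hf).intervalIntegrable
  set c := 2 * r - s ^ 2 + 2 * Ω₁
  set f₁ := fun p => ((1 - b p ^ 2) / (2 * a p ^ 2) - η p - Ω p + Ω₁ + r) * a p
  set f₂ := fun p => (1 / (2 * k p ^ 2) - H p - Ω p + Ω₁ + r) * k p
  set f₃ := fun p => (a p - k p) ^ 2 / (a p * k p ^ 2) - b p ^ 2 / a p
  have hf₁ : IntervalIntegrable f₁ volume 0 1 :=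
    integrable (by fun_prop (disch := intro p hp; have := ha p hp; positivity))
  have hf₂ : IntervalIntegrable f₂ volume 0 1 :=
    integrable (by fun_prop (disch := intro p hp; have := hk p hp; positivity))
  have hf₃ : IntervalIntegrable f₃ volume 0 1 :=
    integrable (by fun_prop (disch := intro p hp; have := ha p hp; have := hk p hp; positivity))
  have hderiv : ∀ p ∈ uIcc (0:ℝ) 1, HasDerivAt (fun p => c * (η p - H p) - η p ^ 2 + H p ^ 2)
      (c * (a p - k p) - 2 * η p * a p + 2 * H p * k p) p := fun p hp => by
    rw [hI] at hp
    exact ((((hη p hp).fun_sub (hH p hp)).const_mul c).fun_sub ((hη p hp).fun_pow 2)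
      |>.fun_add ((hH p hp).fun_pow 2)).congr_deriv (by ring)
  have hcombined : ∫ p in (0:ℝ)..1, (2 * f₁ p - 2 * f₂ p - f₃ p)
      = (c * (η 1 - H 1) - η 1 ^ 2 + H 1 ^ 2) - (c * (η 0 - H 0) - η 0 ^ 2 + H 0 ^ 2) := by
    rw [intervalIntegral.integral_congr fun p hp => flowForce_integrand_algebra
      (ha p (hI ▸ hp)) (hk p (hI ▸ hp)) (hkΩ p (hI ▸ hp))]
    exact intervalIntegral.integral_eq_sub_of_hasDerivAt hderiv (integrable (by fun_prop))
  rw [intervalIntegral.integral_sub ((hf₁.const_mul 2).sub (hf₂.const_mul 2)) hf₃,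
    intervalIntegral.integral_sub (hf₁.const_mul 2) (hf₂.const_mul 2),
    intervalIntegral.integral_const_mul, intervalIntegral.integral_const_mul] at hcombined
  linear_combination hcombined

section StreamSolution

variable {ω : ℝ → ℝ}

theorem hasDerivAt_Omeg (hω : Continuous ω) (p : ℝ) : HasDerivAt (Omeg ω) (ω p) p :=
  intervalIntegral.integral_hasDerivAt_right (hω.intervalIntegrable _ _)
    (hω.stronglyMeasurableAtFilter _ _) hω.continuousAt

theorem continuous_Omeg (hω : Continuous ω) : Continuous (Omeg ω) :=
  continuous_iff_continuousAt.2 fun p => (hasDerivAt_Omeg hω p).continuousAt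

theorem two_mul_Omeg_lt_sq (hω : Continuous ω) {s : ℝ} (hs : s0 ω < s) {p : ℝ}
    (hp : p ∈ Icc (0:ℝ) 1) : 2 * Omeg ω p < s ^ 2 := by
  have hbdd : BddAbove ((fun p => 2 * Omeg ω p) '' Icc (0:ℝ) 1) :=
    (isCompact_Icc.image (continuous_const.mul (continuous_Omeg hω))).bddAbove
  calc 2 * Omeg ω p ≤ sSup ((fun p => 2 * Omeg ω p) '' Icc (0:ℝ) 1) :=
        le_csSup hbdd ⟨p, hp, rfl⟩
    _ < s ^ 2 := (Real.sqrt_lt' ((Real.sqrt_nonneg _).trans_lt hs)).1 hs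

variable {s : ℝ}

theorem Hp_pos (hω : Continuous ω) (hs : s0 ω < s) {p : ℝ} (hp : p ∈ Icc (0:ℝ) 1) :
    0 < Hp ω p s :=
  inv_pos.2 (Real.sqrt_pos.2 (sub_pos.2 (two_mul_Omeg_lt_sq hω hs hp)))

theorem inv_Hp_sq (hω : Continuous ω) (hs : s0 ω < s) {p : ℝ} (hp : p ∈ Icc (0:ℝ) 1) :
    (Hp ω p s ^ 2)⁻¹ = s ^ 2 - 2 * Omeg ω p := by
  rw [Hp, inv_pow, inv_inv, Real.sq_sqrt (sub_nonneg.2 (two_mul_Omeg_lt_sq hω hs hp).le)]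

theorem continuousAt_Hp (hω : Continuous ω) (hs : s0 ω < s) {p : ℝ}
    (hp : p ∈ Icc (0:ℝ) 1) : ContinuousAt (fun p' => Hp ω p' s) p :=
  have := continuous_Omeg hω
  ContinuousAt.inv₀ (by fun_prop) (inv_pos.1 (Hp_pos hω hs hp)).ne'

theorem hasDerivAt_Hfun (hω : Continuous ω) (hs : s0 ω < s) {p : ℝ} (hp : p ∈ Icc (0:ℝ) 1) :
    HasDerivAt (fun p' => Hfun ω p' s) (Hp ω p s) p := by
  have hmeas : Measurable fun p' => Hp ω p' s := by
    have := (continuous_Omeg hω).measurable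
    unfold Hp
    fun_prop
  refine intervalIntegral.integral_hasDerivAt_right (ContinuousOn.intervalIntegrable
    fun x hx => ?_) hmeas.aestronglyMeasurable.stronglyMeasurableAtFilter
      (continuousAt_Hp hω hs hp)
  exact (continuousAt_Hp hω hs
    (uIcc_subset_Icc (left_mem_Icc.2 zero_le_one) hp hx)).continuousWithinAt

end StreamSolution

section Slices

variable {h : ℝ → ℝ → ℝ}

theorem hasDerivAt_dp (hh : Differentiable ℝ (Function.uncurry h)) (q p : ℝ) :
    HasDerivAt (h q) (dp h q p) p :=
  (hh.comp (differentiable_const q |>.prodMk differentiable_id) p).hasDerivAt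

theorem continuous_dp (hh : ContDiff ℝ 1 (Function.uncurry h)) (q : ℝ) : Continuous (dp h q) :=
  (hh.comp (contDiff_const.prodMk contDiff_id)).continuous_deriv le_rfl

theorem continuous_dq (hh : ContDiff ℝ 1 (Function.uncurry h)) (q : ℝ) :
    Continuous fun p => dq h q p := by
  have hdq : ∀ p, dq h q p = fderiv ℝ (Function.uncurry h) (q, p) (1, 0) := fun p =>
    ((hh.differentiable one_ne_zero (q, p)).hasFDerivAt.comp_hasDerivAt (f := fun x => (x, p)) q
      ((hasDerivAt_id q).prodMk (hasDerivAt_const q p))).deriv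
  simp only [hdq]
  exact ((hh.continuous_fderiv one_ne_zero).comp (Continuous.prodMk_right q)).clm_apply
    continuous_const

theorem dp_wfun {ω : ℝ → ℝ} (hω : Continuous ω) {s : ℝ} (hs : s0 ω < s)
    (hh : Differentiable ℝ (Function.uncurry h)) (q : ℝ) {p : ℝ} (hp : p ∈ Icc (0:ℝ) 1) :
    dp (wfun ω s h) q p = dp h q p - Hp ω p s :=
  ((hasDerivAt_dp hh q p).sub (hasDerivAt_Hfun hω hs hp)).deriv

theorem dq_wfun (ω : ℝ → ℝ) (s : ℝ) (q p : ℝ) : dq (wfun ω s h) q p = dq h q p :=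
  deriv_sub_const _

end Slices

/-- for a solution `h` of the height system with flow force `F`, `s > s₀`
and `w = h − H(·;s)`, one has for every `q`:
`2(F − σ(s;r)) = 2(r − R(s)) w(q,1) − w(q,1)² + ∫₀¹ (w_p²/(h_p H_p²) − w_q²/h_p) dp`. -/
theorem stmt12 (ω : ℝ → ℝ) (hω : Continuous ω) (r : ℝ) (h : ℝ → ℝ → ℝ)
    (hsol : HeightSol ω r h)
    (s : ℝ) (hs : s0 ω < s)
    (F : ℝ) (hF : ∀ q : ℝ, F = flowForce ω r h q) :
    ∀ q : ℝ,
      2 * (F - sigmaFun ω s r) =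
        2 * (r - RR ω s) * wfun ω s h q 1 - (wfun ω s h q 1) ^ 2 +
        ∫ p in (0:ℝ)..1,
          ((dp (wfun ω s h) q p) ^ 2 / (dp h q p * (Hp ω p s) ^ 2)
            - (dq (wfun ω s h) q p) ^ 2 / dp h q p) := by
  intro q
  have hC1 : ContDiff ℝ 1 (Function.uncurry h) := hsol.smooth.of_le one_le_two
  have hdiff := hC1.differentiable one_ne_zero
  have key := flowForce_identity_of_hasDerivAt (Ω₁ := Omeg ω 1) (r := r)
    (fun p _ => hasDerivAt_dp hdiff q p) (continuous_dp hC1 q).continuousOn (fun p hp => (hsol.hp_pos q p hp).ne')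
    (continuous_dq hC1 q).continuousOn (fun p hp => hasDerivAt_Hfun hω hs hp)
    (fun p hp => (continuousAt_Hp hω hs hp).continuousWithinAt) (fun p hp => (Hp_pos hω hs hp).ne')
    (continuous_Omeg hω).continuousOn (fun p hp => inv_Hp_sq hω hs hp)
  have hw : ∫ p in (0:ℝ)..1, ((dp (wfun ω s h) q p) ^ 2 / (dp h q p * (Hp ω p s) ^ 2)
      - (dq (wfun ω s h) q p) ^ 2 / dp h q p)
      = ∫ p in (0:ℝ)..1, ((dp h q p - Hp ω p s) ^ 2 / (dp h q p * (Hp ω p s) ^ 2)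
          - (dq h q p) ^ 2 / dp h q p) :=
    intervalIntegral.integral_congr fun p hp => by
      rw [dp_wfun hω hs hdiff q (uIcc_of_le (zero_le_one (α := ℝ)) ▸ hp), dq_wfun]
  have hH₀ : Hfun ω 0 s = 0 := intervalIntegral.integral_same
  rw [hF q, flowForce, sigmaFun, hw, wfun, RR, dd]
  rw [hsol.bot q, hH₀] at key
  linear_combination key
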